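/- arXiv:1407.2322 — 9 statements merged into one kernel-verified Lean document; each statement's English description precedes it below -/
import Mathlib

section
/- For every r > λL, the cost function z is differentiable at r and its derivative vanishes at r if and only if r satisfies the stationarity equation: (r ln 2 / W − 1)·exp(r ln 2 / W − 1) = (α g η (r/(r − λL))² + g η P_s − 1)/e. -/
/-- For every `r > λL`, the cost `z` is differentiable at `r` and its derivative
vanishes at `r` iff `r` satisfies the stationarity equation. -/
theorem deriv_cost_eq_zero_iff_stationarity
    (lam L W g η α E_sw P_sleep κ₁ P_o P_s : ℝ)
    (hlam : 0 < lam) (hL : 0 < L) (hW : 0 < W) (hg : 0 < g) (hη : 0 < η)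
    (hα : 0 < α) (hEsw : 0 ≤ E_sw) (hPsleep : 0 ≤ P_sleep) (hκ₁ : 0 ≤ κ₁)
    (hPs : P_s = P_o - P_sleep - 2 * lam * E_sw)
    (z : ℝ → ℝ)
    (hz : ∀ r : ℝ, z r =
      κ₁ * lam * L + (lam * L / r) * (P_s + ((2 : ℝ) ^ (r / W) - 1) / (g * η))
        + P_sleep + 2 * lam * E_sw + α * (lam * L / (r - lam * L)))
    (r : ℝ) (hr : lam * L < r) :
    DifferentiableAt ℝ z r ∧
    (deriv z r = 0 ↔
      (r * Real.log 2 / W - 1) * Real.exp (r * Real.log 2 / W - 1) =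
        (α * g * η * (r / (r - lam * L)) ^ 2 + g * η * P_s - 1) / Real.exp 1) := by
  have ha : 0 < lam * L := mul_pos hlam hL
  have hr0 : (0:ℝ) < r := lt_trans ha hr
  have hrne : r ≠ 0 := ne_of_gt hr0
  have hra : r - lam * L ≠ 0 := ne_of_gt (by linarith)
  have hgη : g * η ≠ 0 := ne_of_gt (mul_pos hg hη)
  have hWne : W ≠ 0 := ne_of_gt hW
  -- rewrite z as an explicit function with exp
  have hzf : z = fun x : ℝ =>
      κ₁ * lam * L + (lam * L / x) * (P_s + (Real.exp (Real.log 2 * (x / W)) - 1) / (g * η))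
        + P_sleep + 2 * lam * E_sw + α * (lam * L / (x - lam * L)) := by
    funext x
    rw [hz x, Real.rpow_def_of_pos (by norm_num : (0:ℝ) < 2)]
  set E : ℝ := Real.exp (Real.log 2 * (r / W)) with hE
  -- derivative pieces
  have hlin : HasDerivAt (fun x : ℝ => Real.log 2 * (x / W)) (Real.log 2 / W) r := by
    exact (((hasDerivAt_id r).div_const W).const_mul (Real.log 2)).congr_deriv (by ring)
  have hexp : HasDerivAt (fun x : ℝ => Real.exp (Real.log 2 * (x / W))) (E * (Real.log 2 / W)) r :=
    hlin.exp
  have hf : HasDerivAt (fun x : ℝ => P_s + (Real.exp (Real.log 2 * (x / W)) - 1) / (g * η))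
      (E * (Real.log 2 / W) / (g * η)) r :=
    ((hexp.sub_const 1).div_const (g * η)).const_add P_s
  have hq : HasDerivAt (fun x : ℝ => lam * L / x) (lam * L * (-(r ^ 2)⁻¹)) r := by
    simpa [div_eq_mul_inv] using (hasDerivAt_inv hrne).const_mul (lam * L)
  have hn : HasDerivAt (fun x : ℝ => α * (lam * L / (x - lam * L)))
      (α * (lam * L * (-1 / (r - lam * L) ^ 2))) r := by
    have h1 : HasDerivAt (fun x : ℝ => x - lam * L) 1 r := (hasDerivAt_id r).sub_const _
    have h2 := (h1.inv hra).const_mul (lam * L)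
    simpa [div_eq_mul_inv] using h2.const_mul α
  have hmain := (((hq.mul hf).const_add (κ₁ * lam * L)).add_const P_sleep).add_const
      (2 * lam * E_sw)
  have hZ : HasDerivAt z
      (lam * L * (-(r ^ 2)⁻¹) * (P_s + (E - 1) / (g * η))
        + lam * L / r * (E * (Real.log 2 / W) / (g * η))
        + α * (lam * L * (-1 / (r - lam * L) ^ 2))) r := by
    rw [hzf]
    exact hmain.add hn
  refine ⟨hZ.differentiableAt, ?_⟩
  rw [hZ.deriv]
  set x : ℝ := r * Real.log 2 / W with hx
  set R : ℝ := α * g * η * (r / (r - lam * L)) ^ 2 + g * η * P_s - 1 with hR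
  have hEx : E = Real.exp x := by rw [hE, hx]; ring_nf
  have hK : lam * L / (r ^ 2 * (g * η)) ≠ 0 := by
    apply div_ne_zero (ne_of_gt ha)
    positivity
  have key : lam * L * (-(r ^ 2)⁻¹) * (P_s + (E - 1) / (g * η))
        + lam * L / r * (E * (Real.log 2 / W) / (g * η))
        + α * (lam * L * (-1 / (r - lam * L) ^ 2))
      = (lam * L / (r ^ 2 * (g * η))) * (E * (x - 1) - R) := by
    rw [hR, hx]
    field_simp
    ring
  rw [key, mul_eq_zero]
  have he : Real.exp 1 ≠ 0 := Real.exp_ne_zero 1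
  constructor
  · rintro (h | h); · exact absurd h hK
    have hER : E * (x - 1) = R := by linarith
    rw [Real.exp_sub, ← hEx, eq_div_iff he, mul_assoc, div_mul_cancel₀ _ he, mul_comm]
    exact hER
  · intro h
    right
    rw [Real.exp_sub, ← hEx, eq_div_iff he, mul_assoc, div_mul_cancel₀ _ he, mul_comm] at h
    rw [sub_eq_zero]
    exact h
end

section
/- The function G(r) = (r ln 2 / W − 1)·exp(r ln 2 / W − 1) − (α g η (r/(r − λL))² + g η P_s − 1)/e is strictly increasing on the interval (λL, ∞); that is, the left side of the stationarity equation is strictly increasing in r while the right side is strictly decreasing in r on (λL, ∞). -/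
/-- The function `G(r) = LHS(r) - RHS(r)` of the stationarity equation is strictly
increasing on `(λL, ∞)`: the left side is strictly increasing and the right side is
strictly decreasing there. -/
theorem stationarity_gap_strictMonoOn
    (lam L W g η α E_sw P_sleep P_o P_s : ℝ)
    (hlam : 0 < lam) (hL : 0 < L) (hW : 0 < W) (hg : 0 < g) (hη : 0 < η)
    (hα : 0 < α) (hEsw : 0 ≤ E_sw) (hPsleep : 0 ≤ P_sleep)
    (hPs : P_s = P_o - P_sleep - 2 * lam * E_sw) :
    StrictMonoOn (fun r : ℝ =>
        (r * Real.log 2 / W - 1) * Real.exp (r * Real.log 2 / W - 1))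
      (Set.Ioi (lam * L)) ∧
    StrictAntiOn (fun r : ℝ =>
        (α * g * η * (r / (r - lam * L)) ^ 2 + g * η * P_s - 1) / Real.exp 1)
      (Set.Ioi (lam * L)) ∧
    StrictMonoOn (fun r : ℝ =>
        (r * Real.log 2 / W - 1) * Real.exp (r * Real.log 2 / W - 1)
          - (α * g * η * (r / (r - lam * L)) ^ 2 + g * η * P_s - 1) / Real.exp 1)
      (Set.Ioi (lam * L)) := by
  have hc : 0 < Real.log 2 / W := div_pos (Real.log_pos one_lt_two) hW
  have hcpos : 0 < lam * L := mul_pos hlam hL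
  have hmono : StrictMonoOn (fun r : ℝ =>
      (r * Real.log 2 / W - 1) * Real.exp (r * Real.log 2 / W - 1))
      (Set.Ioi (lam * L)) := by
    apply strictMonoOn_of_deriv_pos (convex_Ioi _)
    · fun_prop
    · intro x hx
      rw [interior_Ioi] at hx
      have h1 : HasDerivAt (fun r : ℝ => r * Real.log 2 / W - 1) (Real.log 2 / W) x := by
        simpa using (((hasDerivAt_id x).mul_const (Real.log 2)).div_const W).sub_const 1
      have hd := h1.mul h1.exp
      rw [show (fun r : ℝ => (r * Real.log 2 / W - 1) * Real.exp (r * Real.log 2 / W - 1)) = ((fun r : ℝ => r * Real.log 2 / W - 1) * fun x => Real.exp (x * Real.log 2 / W - 1)) from rfl, hd.deriv]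
      have hx0 : 0 < x := lt_trans hcpos hx
      have hxc : 0 < x * Real.log 2 / W := by positivity
      have hE := Real.exp_pos (x * Real.log 2 / W - 1)
      nlinarith [mul_pos (mul_pos hc hE) hxc]
  have hanti : StrictAntiOn (fun r : ℝ =>
      (α * g * η * (r / (r - lam * L)) ^ 2 + g * η * P_s - 1) / Real.exp 1)
      (Set.Ioi (lam * L)) := by
    intro a ha b hb hab
    simp only [Set.mem_Ioi] at ha hb
    have hae : 0 < a - lam * L := by linarith
    have hbe : 0 < b - lam * L := by linarith
    have hkey : b / (b - lam * L) < a / (a - lam * L) := by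
      rw [div_lt_div_iff₀ hbe hae]
      nlinarith
    have hb0 : 0 < b := lt_trans hcpos hb
    have hbpos : 0 ≤ b / (b - lam * L) := le_of_lt (div_pos hb0 hbe)
    have hsq : (b / (b - lam * L)) ^ 2 < (a / (a - lam * L)) ^ 2 :=
      pow_lt_pow_left₀ hkey hbpos two_ne_zero
    have hC : 0 < α * g * η := by positivity
    have hE : 0 < Real.exp 1 := Real.exp_pos 1
    dsimp only
    gcongr
  refine ⟨hmono, hanti, ?_⟩
  intro a ha b hb hab
  have h1 := hmono ha hb hab
  have h2 := hanti ha hb hab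
  dsimp only at h1 h2 ⊢
  linarith
end

section
/- There exists exactly one r* in the interval (λL, ∞) satisfying the stationarity equation (r* ln 2 / W − 1)·exp(r* ln 2 / W − 1) = (α g η (r*/(r* − λL))² + g η P_s − 1)/e; in other words, the optimal data transmission rate is unique. -/
open Filter Set Real

/-- `t ↦ t * exp t` is strictly monotone on `[-1, ∞)`. -/
lemma aux_strictMonoOn_mul_exp : StrictMonoOn (fun t : ℝ => t * Real.exp t) (Set.Ici (-1)) := by
  apply strictMonoOn_of_deriv_pos (convex_Ici _)
  · exact (continuous_id.mul Real.continuous_exp).continuousOn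
  · intro x hx
    rw [interior_Ici] at hx
    have hd : HasDerivAt (fun t : ℝ => t * Real.exp t) (1 * Real.exp x + x * Real.exp x) x :=
      (hasDerivAt_id x).mul (Real.hasDerivAt_exp x)
    rw [hd.deriv]
    have := Real.exp_pos x
    have : (-1 : ℝ) < x := hx
    nlinarith [Real.exp_pos x]

/-- There is exactly one `r* ∈ (λL, ∞)` satisfying the stationarity equation:
the optimal data transmission rate is unique. -/
theorem optimal_rate_exists_unique
    (lam L W g η α E_sw P_sleep P_o P_s : ℝ)
    (hlam : 0 < lam) (hL : 0 < L) (hW : 0 < W) (hg : 0 < g) (hη : 0 < η)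
    (hα : 0 < α) (hEsw : 0 ≤ E_sw) (hPsleep : 0 ≤ P_sleep)
    (hPs : P_s = P_o - P_sleep - 2 * lam * E_sw) :
    ∃! r : ℝ, lam * L < r ∧
      (r * Real.log 2 / W - 1) * Real.exp (r * Real.log 2 / W - 1) =
        (α * g * η * (r / (r - lam * L)) ^ 2 + g * η * P_s - 1) / Real.exp 1 := by
  set a := lam * L with ha_def
  have ha : 0 < a := mul_pos hlam hL
  set u : ℝ → ℝ := fun r => r * Real.log 2 / W - 1 with hu_def
  set f1 : ℝ → ℝ := fun r => u r * Real.exp (u r) with hf1_def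
  set f2 : ℝ → ℝ := fun r => (α * g * η * (r / (r - a)) ^ 2 + g * η * P_s - 1) / Real.exp 1
    with hf2_def
  set h : ℝ → ℝ := fun r => f1 r - f2 r with hh_def
  have hlog2 : 0 < Real.log 2 := Real.log_pos one_lt_two
  have hcW : 0 < Real.log 2 / W := div_pos hlog2 hW
  have hαgη : 0 < α * g * η := by positivity
  -- u is strictly monotone and maps Ioi a into Ici (-1)
  have hu_mono : StrictMono u := by
    intro x y hxy
    simp only [hu_def]
    have : x * Real.log 2 / W < y * Real.log 2 / W := by
      rw [mul_div_assoc, mul_div_assoc]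
      exact mul_lt_mul_of_pos_right hxy hcW
    linarith
  have hu_maps : Set.MapsTo u (Set.Ioi a) (Set.Ici (-1)) := by
    intro r hr
    simp only [hu_def, Set.mem_Ici]
    have : 0 < r := lt_trans ha hr
    have : 0 < r * Real.log 2 / W := by positivity
    linarith
  -- f1 strictly monotone on Ioi a
  have hf1_mono : StrictMonoOn f1 (Set.Ioi a) :=
    aux_strictMonoOn_mul_exp.comp (hu_mono.strictMonoOn _) hu_maps
  -- q is strictly antitone on Ioi a
  have hq_anti : ∀ x ∈ Set.Ioi a, ∀ y ∈ Set.Ioi a, x < y →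
      y / (y - a) < x / (x - a) := by
    intro x hx y hy hxy
    have hx' : 0 < x - a := sub_pos.2 hx
    have hy' : 0 < y - a := sub_pos.2 hy
    rw [div_lt_div_iff₀ hy' hx']
    nlinarith
  have hq_pos : ∀ x ∈ Set.Ioi a, 0 < x / (x - a) := by
    intro x hx
    have : 0 < x - a := sub_pos.2 hx
    have : 0 < x := lt_trans ha hx
    positivity
  -- f2 strictly antitone on Ioi a
  have hf2_anti : ∀ x ∈ Set.Ioi a, ∀ y ∈ Set.Ioi a, x < y → f2 y < f2 x := by
    intro x hx y hy hxy
    simp only [hf2_def]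
    have h1 : y / (y - a) < x / (x - a) := hq_anti x hx y hy hxy
    have h2 : 0 < y / (y - a) := hq_pos y hy
    have h3 : (y / (y - a)) ^ 2 < (x / (x - a)) ^ 2 := by nlinarith
    have h4 : α * g * η * (y / (y - a)) ^ 2 < α * g * η * (x / (x - a)) ^ 2 :=
      mul_lt_mul_of_pos_left h3 hαgη
    rw [div_lt_div_iff₀ (Real.exp_pos 1) (Real.exp_pos 1)]
    nlinarith [Real.exp_pos 1]
  -- h strictly monotone on Ioi a
  have hh_mono : StrictMonoOn h (Set.Ioi a) := by
    intro x hx y hy hxy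
    have := hf1_mono hx hy hxy
    have := hf2_anti x hx y hy hxy
    simp only [hh_def]
    linarith
  -- continuity of h on Ioi a
  have hcu : Continuous u := (continuous_id.mul continuous_const).div_const W
    |>.sub continuous_const
  have hh_cont : ContinuousOn h (Set.Ioi a) := by
    apply ContinuousOn.sub
    · exact (hcu.mul (Real.continuous_exp.comp hcu)).continuousOn
    · apply ContinuousOn.div_const
      have hq_cont : ContinuousOn (fun r : ℝ => r / (r - a)) (Set.Ioi a) :=
        ContinuousOn.div continuousOn_id (continuousOn_id.sub continuousOn_const)
          (fun x hx => ne_of_gt (sub_pos.2 hx))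
      exact ((continuousOn_const.mul (hq_cont.pow 2)).add continuousOn_const).sub
        continuousOn_const
  -- h tends to -∞ as r → a⁺
  have h_atBot : Tendsto h (nhdsWithin a (Set.Ioi a)) atBot := by
    have hsub : Tendsto (fun r => r - a) (nhdsWithin a (Set.Ioi a)) (nhdsWithin 0 (Set.Ioi 0)) := by
      apply tendsto_nhdsWithin_of_tendsto_nhds_of_eventually_within
      · have : Tendsto (fun r : ℝ => r - a) (nhds a) (nhds (a - a)) :=
          (continuous_id.sub continuous_const).tendsto a
        simpa using this.mono_left nhdsWithin_le_nhds
      · filter_upwards [self_mem_nhdsWithin] with r hr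
        exact sub_pos.2 (Set.mem_Ioi.mp hr)
    have hinv : Tendsto (fun r => (r - a)⁻¹) (nhdsWithin a (Set.Ioi a)) atTop :=
      tendsto_inv_nhdsGT_zero.comp hsub
    have hq : Tendsto (fun r => r / (r - a)) (nhdsWithin a (Set.Ioi a)) atTop := by
      have hid : Tendsto (fun r : ℝ => r) (nhdsWithin a (Set.Ioi a)) (nhds a) :=
        tendsto_id.mono_left nhdsWithin_le_nhds
      simpa [div_eq_mul_inv] using hid.pos_mul_atTop ha hinv
    have hq2 : Tendsto (fun r => (r / (r - a)) ^ 2) (nhdsWithin a (Set.Ioi a)) atTop := by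
      simpa [sq] using hq.atTop_mul_atTop₀ hq
    have hf2_top : Tendsto f2 (nhdsWithin a (Set.Ioi a)) atTop := by
      apply Tendsto.atTop_div_const (Real.exp_pos 1)
      have := (hq2.const_mul_atTop hαgη)
      simpa [sub_eq_add_neg, add_assoc] using
        tendsto_atTop_add_const_right _ (g * η * P_s - 1) this
    have hf1_lim : Tendsto f1 (nhdsWithin a (Set.Ioi a)) (nhds (f1 a)) := by
      have : Continuous f1 := hcu.mul (Real.continuous_exp.comp hcu)
      exact (this.tendsto a).mono_left nhdsWithin_le_nhds
    have : Tendsto (fun r => f1 r + -f2 r) (nhdsWithin a (Set.Ioi a)) atBot :=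
      hf1_lim.add_atBot (tendsto_neg_atTop_atBot.comp hf2_top)
    simpa [hh_def, sub_eq_add_neg] using this
  -- h tends to +∞ as r → ∞
  have h_atTop : Tendsto h atTop atTop := by
    have hu_top : Tendsto u atTop atTop := by
      apply tendsto_atTop_add_const_right
      exact (tendsto_id.atTop_mul_const hlog2).atTop_div_const hW
    have hf1_top : Tendsto f1 atTop atTop :=
      hu_top.atTop_mul_atTop₀ (Real.tendsto_exp_atTop.comp hu_top)
    have hq_lim : Tendsto (fun r => r / (r - a)) atTop (nhds 1) := by
      have h1 : Tendsto (fun r : ℝ => (r - a)⁻¹) atTop (nhds 0) :=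
        tendsto_inv_atTop_zero.comp (tendsto_atTop_add_const_right _ (-a) tendsto_id)
      have h2 : Tendsto (fun r : ℝ => 1 + a * (r - a)⁻¹) atTop (nhds (1 + a * 0)) :=
        tendsto_const_nhds.add (tendsto_const_nhds.mul h1)
      rw [Filter.tendsto_congr' ?_]
      · simpa using h2
      · filter_upwards [eventually_gt_atTop a] with r hr
        have : r - a ≠ 0 := ne_of_gt (sub_pos.2 hr)
        field_simp
        ring
    have hf2_lim : Tendsto f2 atTop
        (nhds ((α * g * η * 1 ^ 2 + g * η * P_s - 1) / Real.exp 1)) := by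
      apply Tendsto.div_const
      exact ((tendsto_const_nhds.mul (hq_lim.pow 2)).add tendsto_const_nhds).sub tendsto_const_nhds
        |>.congr (fun r => by ring)
    have : Tendsto (fun r => -f2 r + f1 r) atTop atTop :=
      (hf2_lim.neg).add_atTop hf1_top
    simpa [hh_def, sub_eq_add_neg, add_comm] using this
  -- find r1 with h r1 < 0
  obtain ⟨r1, hr1a, hr1⟩ : ∃ r1, a < r1 ∧ h r1 < 0 := by
    have := (h_atBot.eventually (eventually_lt_atBot (0:ℝ))).and self_mem_nhdsWithin
    obtain ⟨r1, h1, h2⟩ := this.exists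
    exact ⟨r1, h2, h1⟩
  -- find r2 > r1 with h r2 > 0
  obtain ⟨r2, hr12, hr2⟩ : ∃ r2, r1 < r2 ∧ 0 < h r2 := by
    have := (h_atTop.eventually (eventually_gt_atTop (0:ℝ))).and (eventually_gt_atTop r1)
    obtain ⟨r2, h1, h2⟩ := this.exists
    exact ⟨r2, h2, h1⟩
  have hIcc_sub : Set.Icc r1 r2 ⊆ Set.Ioi a := fun x hx => lt_of_lt_of_le hr1a hx.1
  -- IVT
  obtain ⟨r0, hr0_mem, hr0⟩ : ∃ r0 ∈ Set.Icc r1 r2, h r0 = 0 := by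
    have h0mem : (0:ℝ) ∈ Set.Icc (h r1) (h r2) := ⟨hr1.le, hr2.le⟩
    obtain ⟨r0, hmem, heq⟩ := intermediate_value_Icc hr12.le (hh_cont.mono hIcc_sub) h0mem
    exact ⟨r0, hmem, heq⟩
  have hr0a : a < r0 := hIcc_sub hr0_mem
  refine ⟨r0, ⟨hr0a, ?_⟩, ?_⟩
  · have : f1 r0 - f2 r0 = 0 := hr0
    have := sub_eq_zero.mp this
    simpa [hf1_def, hf2_def, hu_def] using this
  · rintro r ⟨hra, hreq⟩
    have hr_zero : h r = 0 := by
      simp only [hh_def, hf1_def, hf2_def, hu_def]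
      rw [sub_eq_zero]
      exact hreq
    exact hh_mono.injOn hra hr0a (by rw [hr_zero, hr0])
end

section
/- Let r* be the unique solution in (λL, ∞) of the stationarity equation (r ln 2 / W − 1)·exp(r ln 2 / W − 1) = (α g η (r/(r − λL))² + g η P_s − 1)/e. Then z is strictly decreasing on (λL, r*) and strictly increasing on (r*, ∞); in particular z attains its global minimum over (λL, ∞) uniquely at r*. -/
/-- The function `u ↦ (u-1) e^u` is strictly monotone on `[0, ∞)`. -/
lemma aux_G_strictMono : StrictMonoOn (fun u : ℝ => (u - 1) * Real.exp u) (Set.Ici 0) := by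
  apply strictMonoOn_of_deriv_pos (convex_Ici 0)
  · exact ((continuous_id.sub continuous_const).mul Real.continuous_exp).continuousOn
  · intro x hx
    rw [interior_Ici] at hx
    have h : HasDerivAt (fun u : ℝ => (u - 1) * Real.exp u)
        (1 * Real.exp x + (x - 1) * Real.exp x) x :=
      ((hasDerivAt_id x).sub_const 1).mul (Real.hasDerivAt_exp x)
    rw [h.deriv]
    have he := Real.exp_pos x
    have hx' : 0 < x := hx
    nlinarith [mul_pos hx' he]

set_option maxHeartbeats 1000000 in
/-- If `r*` solves the stationarity equation, then `z` is strictly decreasing on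
`(λL, r*)` and strictly increasing on `(r*, ∞)`; in particular `z` attains its global
minimum over `(λL, ∞)` uniquely at `r*`. -/
theorem cost_decreasing_then_increasing
    (lam L W g η α E_sw P_sleep κ₁ P_o P_s : ℝ)
    (hlam : 0 < lam) (hL : 0 < L) (hW : 0 < W) (hg : 0 < g) (hη : 0 < η)
    (hα : 0 < α) (hEsw : 0 ≤ E_sw) (hPsleep : 0 ≤ P_sleep) (hκ₁ : 0 ≤ κ₁)
    (hPs : P_s = P_o - P_sleep - 2 * lam * E_sw)
    (z : ℝ → ℝ)
    (hz : ∀ r : ℝ, lam * L < r → z r =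
      κ₁ * lam * L + (lam * L / r) * (P_s + ((2 : ℝ) ^ (r / W) - 1) / (g * η))
        + P_sleep + 2 * lam * E_sw + α * (lam * L / (r - lam * L)))
    (rstar : ℝ) (hrstar : lam * L < rstar)
    (heq : (rstar * Real.log 2 / W - 1) * Real.exp (rstar * Real.log 2 / W - 1) =
      (α * g * η * (rstar / (rstar - lam * L)) ^ 2 + g * η * P_s - 1) / Real.exp 1) :
    StrictAntiOn z (Set.Ioo (lam * L) rstar) ∧
    StrictMonoOn z (Set.Ioi rstar) ∧
    (∀ r : ℝ, lam * L < r → r ≠ rstar → z rstar < z r) := by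
  set c := lam * L with hc_def
  have hc : 0 < c := mul_pos hlam hL
  have hK : 0 < g * η := mul_pos hg hη
  have hW' : W ≠ 0 := ne_of_gt hW
  have hl2 : 0 < Real.log 2 := Real.log_pos one_lt_two
  set φ : ℝ → ℝ := fun r =>
    (r * Real.log 2 / W - 1) * Real.exp (r * Real.log 2 / W)
      + 1 - g * η * P_s - α * (g * η) * (r / (r - c)) ^ 2 with hφ_def
  -- φ is strictly monotone on (c, ∞)
  have hφmono : StrictMonoOn φ (Set.Ioi c) := by
    intro a ha b hb hab
    have ha' : c < a := ha
    have hb' : c < b := hb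
    have ha0 : 0 < a := hc.trans ha'
    have hb0 : 0 < b := hc.trans hb'
    have hac : 0 < a - c := sub_pos.mpr ha'
    have hbc : 0 < b - c := sub_pos.mpr hb'
    -- exponential part
    have hua : 0 ≤ a * Real.log 2 / W := by positivity
    have hub : 0 ≤ b * Real.log 2 / W := by positivity
    have huab : a * Real.log 2 / W < b * Real.log 2 / W := by gcongr
    have hG : (a * Real.log 2 / W - 1) * Real.exp (a * Real.log 2 / W)
        < (b * Real.log 2 / W - 1) * Real.exp (b * Real.log 2 / W) :=
      aux_G_strictMono hua hub huab
    -- ratio part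
    have hqpos : 0 < b / (b - c) := div_pos hb0 hbc
    have hqlt : b / (b - c) < a / (a - c) := by
      rw [div_lt_div_iff₀ hbc hac]
      nlinarith
    have hqsq : (b / (b - c)) ^ 2 < (a / (a - c)) ^ 2 :=
      pow_lt_pow_left₀ hqlt (le_of_lt hqpos) (by norm_num)
    have hαK : 0 < α * (g * η) := mul_pos hα hK
    simp only [hφ_def]
    nlinarith [mul_pos hαK (sub_pos.mpr hqsq)]
  -- φ rstar = 0
  have hφstar : φ rstar = 0 := by
    have hrcne : rstar - c ≠ 0 := ne_of_gt (sub_pos.mpr hrstar)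
    rw [Real.exp_sub] at heq
    field_simp [hrcne] at heq
    have heq2 : ((rstar * Real.log 2 - W) * Real.exp (rstar * Real.log 2 / W) * (rstar - c) ^ 2)
        * Real.exp 1 =
        ((α * g * η * rstar ^ 2 + g * η * P_s * (rstar - c) ^ 2 - (rstar - c) ^ 2) * W)
        * Real.exp 1 := by linear_combination Real.exp 1 * heq
    have heq3 := mul_right_cancel₀ (Real.exp_ne_zero 1) heq2
    simp only [hφ_def]
    field_simp [hrcne]
    linear_combination heq3
  -- derivative of z
  have hderiv : ∀ r ∈ Set.Ioi c, HasDerivAt z (c / ((g * η) * r ^ 2) * φ r) r := by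
    intro r hr
    have hr' : c < r := hr
    have hr0 : 0 < r := hc.trans hr'
    have hrne : r ≠ 0 := ne_of_gt hr0
    have hrc0 : 0 < r - c := sub_pos.mpr hr'
    have hrc : r - c ≠ 0 := ne_of_gt hrc0
    -- derivative of c / x
    have hA : HasDerivAt (fun x : ℝ => c / x) (-(c / r ^ 2)) r := by
      have := (hasDerivAt_inv hrne).const_mul c
      simpa [div_eq_mul_inv, mul_neg] using this
    -- derivative of 2 ^ (x / W)
    have hE : HasDerivAt (fun x : ℝ => (2 : ℝ) ^ (x / W))
        (Real.exp (r * Real.log 2 / W) * (Real.log 2 / W)) r := by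
      have h1 : HasDerivAt (fun x : ℝ => Real.log 2 * (x / W)) (Real.log 2 / W) r := by
        simpa [mul_one_div, div_eq_mul_inv] using ((hasDerivAt_id r).div_const W).const_mul (Real.log 2)
      have h2 := h1.exp
      have hfun : (fun x : ℝ => (2 : ℝ) ^ (x / W))
          = fun x : ℝ => Real.exp (Real.log 2 * (x / W)) :=
        funext fun x => Real.rpow_def_of_pos two_pos _
      rw [hfun, show r * Real.log 2 / W = Real.log 2 * (r / W) by ring]
      exact h2
    have hB : HasDerivAt (fun x : ℝ => P_s + ((2 : ℝ) ^ (x / W) - 1) / (g * η))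
        (Real.exp (r * Real.log 2 / W) * (Real.log 2 / W) / (g * η)) r :=
      ((hE.sub_const 1).div_const (g * η)).const_add P_s
    have hprod := hA.mul hB
    have hq : HasDerivAt (fun x : ℝ => c / (x - c)) (-(c / (r - c) ^ 2)) r := by
      have := (hasDerivAt_const r c).div ((hasDerivAt_id r).sub_const c) hrc
      simpa [neg_div, Pi.div_def] using this
    have hF : HasDerivAt (fun x : ℝ =>
        κ₁ * lam * L + (c / x) * (P_s + ((2 : ℝ) ^ (x / W) - 1) / (g * η))
          + P_sleep + 2 * lam * E_sw + α * (c / (x - c)))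
        ((-(c / r ^ 2) * (P_s + ((2 : ℝ) ^ (r / W) - 1) / (g * η))
          + (c / r) * (Real.exp (r * Real.log 2 / W) * (Real.log 2 / W) / (g * η)))
          + α * (-(c / (r - c) ^ 2))) r :=
      (((hprod.const_add (κ₁ * lam * L)).add_const P_sleep).add_const
        (2 * lam * E_sw)).add (hq.const_mul α)
    have hev : z =ᶠ[nhds r] (fun x : ℝ =>
        κ₁ * lam * L + (c / x) * (P_s + ((2 : ℝ) ^ (x / W) - 1) / (g * η))
          + P_sleep + 2 * lam * E_sw + α * (c / (x - c))) := by
      filter_upwards [isOpen_Ioi.mem_nhds hr] with x hx using hz x hx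
    have hz' := hF.congr_of_eventuallyEq hev
    have hval : (-(c / r ^ 2) * (P_s + ((2 : ℝ) ^ (r / W) - 1) / (g * η))
          + (c / r) * (Real.exp (r * Real.log 2 / W) * (Real.log 2 / W) / (g * η)))
          + α * (-(c / (r - c) ^ 2)) = c / ((g * η) * r ^ 2) * φ r := by
      rw [Real.rpow_def_of_pos two_pos,
        show Real.log 2 * (r / W) = r * Real.log 2 / W by ring]
      simp only [hφ_def]
      have hKne : g * η ≠ 0 := ne_of_gt hK
      field_simp
      ring
    rwa [hval] at hz'
  -- strict anti on Ioc c rstar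
  have hanti : StrictAntiOn z (Set.Ioc c rstar) := by
    apply strictAntiOn_of_deriv_neg (convex_Ioc c rstar)
    · intro x hx
      exact (hderiv x hx.1).continuousAt.continuousWithinAt
    · intro x hx
      rw [interior_Ioc] at hx
      rw [(hderiv x hx.1).deriv]
      have h1 : φ x < φ rstar := hφmono hx.1 hrstar hx.2
      rw [hφstar] at h1
      have hx0 : 0 < x := hc.trans hx.1
      have hpos : 0 < c / ((g * η) * x ^ 2) := by positivity
      exact mul_neg_of_pos_of_neg hpos h1
  -- strict mono on Ici rstar
  have hmono : StrictMonoOn z (Set.Ici rstar) := by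
    apply strictMonoOn_of_deriv_pos (convex_Ici rstar)
    · intro x hx
      exact (hderiv x (lt_of_lt_of_le hrstar hx)).continuousAt.continuousWithinAt
    · intro x hx
      rw [interior_Ici] at hx
      have hxc : c < x := hrstar.trans hx
      rw [(hderiv x hxc).deriv]
      have h1 : φ rstar < φ x := hφmono hrstar hxc hx
      rw [hφstar] at h1
      have hx0 : 0 < x := hc.trans hxc
      have hpos : 0 < c / ((g * η) * x ^ 2) := by positivity
      exact mul_pos hpos h1
  refine ⟨hanti.mono Set.Ioo_subset_Ioc_self, hmono.mono Set.Ioi_subset_Ici_self, ?_⟩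
  intro r hr hne
  rcases lt_or_gt_of_ne hne with h | h
  · exact hanti ⟨hr, le_of_lt h⟩ ⟨hrstar, le_refl rstar⟩ h
  · exact hmono (le_refl rstar) (le_of_lt h) h
end

section
/- (Proposition 1, part 1) Assume λ < (P_o − P_sleep)/(2 E_sw) (so that P_s > 0), and let w be the unique real with w ≥ −1 and w·e^w = (g η P_s − 1)/e; set r_e = (W/ln 2)(w + 1). If additionally L < (W/(λ ln 2))(w + 1), i.e. λL < r_e, then r_e lies in (λL, ∞) and is the unique global minimizer of the average power E{P} on (λL, ∞): E{P}(r_e) < E{P}(r) for every r ∈ (λL, ∞) with r ≠ r_e. -/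
private lemma div_lt_div_of_pos_left_aux {a b c : ℝ} (h : a < b) (hc : 0 < c) :
    a / c < b / c := by
  gcongr


/-- Proposition 1, part 1: when `λ < (P_o − P_sleep)/(2 E_sw)` (so `P_s > 0`) and
`L < (W/(λ ln 2))(w + 1)` (i.e. `λL < r_e`), the energy optimal rate
`r_e = (W/ln 2)(w + 1)` exists in `(λL, ∞)` and is the unique global minimizer of the
average power `E{P}` there. -/
theorem energy_optimal_rate_unique_minimizer
    (lam L W g η E_sw P_sleep κ₁ P_o P_s : ℝ)
    (hlam : 0 < lam) (hL : 0 < L) (hW : 0 < W) (hg : 0 < g) (hη : 0 < η)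
    (hEsw : 0 ≤ E_sw) (hPsleep : 0 ≤ P_sleep) (hκ₁ : 0 ≤ κ₁)
    (hPs : P_s = P_o - P_sleep - 2 * lam * E_sw)
    (EP : ℝ → ℝ)
    (hEP : ∀ r : ℝ, lam * L < r → EP r =
      κ₁ * lam * L + (lam * L / r) * (P_s + ((2 : ℝ) ^ (r / W) - 1) / (g * η))
        + P_sleep + 2 * lam * E_sw)
    (hcond : lam < (P_o - P_sleep) / (2 * E_sw))
    (w : ℝ) (hw : -1 ≤ w)
    (hweq : w * Real.exp w = (g * η * P_s - 1) / Real.exp 1)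
    (re : ℝ) (hre : re = W / Real.log 2 * (w + 1))
    (hLcond : L < W / (lam * Real.log 2) * (w + 1)) :
    lam * L < re ∧ ∀ r : ℝ, lam * L < r → r ≠ re → EP re < EP r := by
  have hlog2 : (0:ℝ) < Real.log 2 := Real.log_pos (by norm_num)
  have hgη : 0 < g * η := mul_pos hg hη
  set c : ℝ := Real.log 2 / W with hc_def
  have hc : 0 < c := div_pos hlog2 hW
  set a : ℝ := (g * η)⁻¹ with ha_def
  have ha : 0 < a := inv_pos.2 hgη
  have hre0 : lam * L < re := by
    have h := (mul_lt_mul_iff_right₀ hlam).2 hLcond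
    calc lam * L < lam * (W / (lam * Real.log 2) * (w + 1)) := h
      _ = re := by
          rw [hre]
          field_simp
  have hLL : 0 < lam * L := mul_pos hlam hL
  have hrepos : 0 < re := lt_trans hLL hre0
  have hcre : c * re = w + 1 := by
    rw [hre, hc_def]
    field_simp
  have hA : P_s - a = a * Real.exp (c * re) * (c * re - 1) := by
    rw [hcre]
    have h1 : Real.exp (w + 1) = Real.exp 1 * Real.exp w := by
      rw [← Real.exp_add]; ring_nf
    have h2 : a * (Real.exp 1 * Real.exp w) * (w + 1 - 1)
        = a * Real.exp 1 * (w * Real.exp w) := by ring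
    rw [h1, h2, hweq, ha_def]
    have he : Real.exp 1 ≠ 0 := (Real.exp_pos 1).ne'
    field_simp
  have hrw : ∀ s : ℝ, P_s + ((2 : ℝ) ^ (s / W) - 1) / (g * η)
      = (P_s - a) + a * Real.exp (c * s) := by
    intro s
    rw [Real.rpow_def_of_pos (by norm_num : (0:ℝ) < 2)]
    have h3 : Real.log 2 * (s / W) = c * s := by rw [hc_def]; ring
    rw [h3, div_eq_mul_inv, ← ha_def]
    ring
  refine ⟨hre0, ?_⟩
  intro r hr hrne
  have hr0 : 0 < r := lt_trans hLL hr
  rw [hEP re hre0, hEP r hr, hrw, hrw]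
  have hdiv : ((P_s - a) + a * Real.exp (c * re)) * r
      < ((P_s - a) + a * Real.exp (c * r)) * re := by
    have hx : c * r - c * re ≠ 0 := by
      intro h
      apply hrne
      have hcc : c * r = c * re := by linarith
      exact mul_left_cancel₀ hc.ne' hcc
    have hexp : (c * r - c * re) + 1 < Real.exp (c * r - c * re) :=
      Real.add_one_lt_exp hx
    have hEr : Real.exp (c * r) = Real.exp (c * re) * Real.exp (c * r - c * re) := by
      rw [← Real.exp_add]; ring_nf
    have key : ((P_s - a) + a * Real.exp (c * r)) * re
        - ((P_s - a) + a * Real.exp (c * re)) * r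
        = a * re * Real.exp (c * re)
          * (Real.exp (c * r - c * re) - (c * r - c * re) - 1) := by
      rw [hEr, hA]; ring
    have hpos : 0 < a * re * Real.exp (c * re)
        * (Real.exp (c * r - c * re) - (c * r - c * re) - 1) := by
      apply mul_pos
      · exact mul_pos (mul_pos ha hrepos) (Real.exp_pos _)
      · linarith
    nlinarith [key, hpos]
  have main : lam * L / re * ((P_s - a) + a * Real.exp (c * re))
      < lam * L / r * ((P_s - a) + a * Real.exp (c * r)) := by
    have e1 : lam * L / re * ((P_s - a) + a * Real.exp (c * re))
        = lam * L * (((P_s - a) + a * Real.exp (c * re)) * r) / (re * r) := by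
      field_simp
    have e2 : lam * L / r * ((P_s - a) + a * Real.exp (c * r))
        = lam * L * (((P_s - a) + a * Real.exp (c * r)) * re) / (re * r) := by
      field_simp
    rw [e1, e2]
    exact div_lt_div_of_pos_left_aux (mul_lt_mul_of_pos_left hdiv hLL) (mul_pos hrepos hr0)
  linarith
end

section
/- (Proposition 1, part 2) Suppose either P_s ≤ 0, or P_s > 0 and λL ≥ r_e, where r_e = (W/ln 2)(w + 1) with w the unique real ≥ −1 satisfying w·e^w = (g η P_s − 1)/e. Then the average power E{P} is strictly increasing on (λL, ∞); equivalently, since the average delay is strictly decreasing in the rate r, the average power consumption is monotonically decreasing as a function of the average delay. -/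
lemma phi_hasDeriv (t : ℝ) :
    HasDerivAt (fun t => (t - 1) * Real.exp t + 1) (t * Real.exp t) t := by
  have h : HasDerivAt (fun t : ℝ => (t - 1) * Real.exp t + 1)
      (1 * Real.exp t + (t - 1) * Real.exp t) t :=
    (((hasDerivAt_id t).sub_const 1).mul (Real.hasDerivAt_exp t)).add_const 1
  convert h using 1; ring

lemma phi_strictMono : StrictMonoOn (fun t => (t - 1) * Real.exp t + 1) (Set.Ici 0) := by
  apply strictMonoOn_of_deriv_pos (convex_Ici 0)
  · exact Continuous.continuousOn (by continuity)
  · intro t ht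
    rw [interior_Ici] at ht
    rw [(phi_hasDeriv t).deriv]
    exact mul_pos ht (Real.exp_pos t)

/-- Proposition 1, part 2: if `P_s ≤ 0`, or `P_s > 0` and `λL ≥ r_e`, then the average
power `E{P}` is strictly increasing in the rate on `(λL, ∞)` (equivalently, strictly
decreasing as a function of the average delay). -/
theorem power_monotone_when_no_interior_optimum
    (lam L W g η E_sw P_sleep κ₁ P_o P_s : ℝ)
    (hlam : 0 < lam) (hL : 0 < L) (hW : 0 < W) (hg : 0 < g) (hη : 0 < η)
    (hEsw : 0 ≤ E_sw) (hPsleep : 0 ≤ P_sleep) (hκ₁ : 0 ≤ κ₁)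
    (hPs : P_s = P_o - P_sleep - 2 * lam * E_sw)
    (EP : ℝ → ℝ)
    (hEP : ∀ r : ℝ, lam * L < r → EP r =
      κ₁ * lam * L + (lam * L / r) * (P_s + ((2 : ℝ) ^ (r / W) - 1) / (g * η))
        + P_sleep + 2 * lam * E_sw)
    (hcond : P_s ≤ 0 ∨ (0 < P_s ∧ ∀ w : ℝ, -1 ≤ w →
      w * Real.exp w = (g * η * P_s - 1) / Real.exp 1 →
      W / Real.log 2 * (w + 1) ≤ lam * L)) :
    StrictMonoOn EP (Set.Ioi (lam * L)) := by
  have hlog2 : 0 < Real.log 2 := Real.log_pos one_lt_two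
  set a : ℝ := Real.log 2 / W with ha_def
  have ha : 0 < a := div_pos hlog2 hW
  have hgη : 0 < g * η := mul_pos hg hη
  set c : ℝ := 1 / (g * η) with hc_def
  have hc : 0 < c := by positivity
  have hlamL : 0 < lam * L := mul_pos hlam hL
  -- choose t₀ ≥ 0 with t₀ ≤ a·λL and P_s ≤ c·φ(t₀)
  obtain ⟨t₀, ht₀0, ht₀le, ht₀val⟩ :
      ∃ t₀ : ℝ, 0 ≤ t₀ ∧ t₀ ≤ a * (lam * L) ∧ P_s ≤ c * ((t₀ - 1) * Real.exp t₀ + 1) := by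
    rcases hcond with h | ⟨hPs0, hcond⟩
    · refine ⟨0, le_refl 0, (mul_pos ha hlamL).le, ?_⟩
      simp only [Real.exp_zero]
      nlinarith
    · set cv : ℝ := (g * η * P_s - 1) / Real.exp 1 with hcv_def
      set b : ℝ := max 0 cv with hb_def
      have hb0 : (0 : ℝ) ≤ b := le_max_left _ _
      have hfb : cv ≤ b * Real.exp b := by
        calc cv ≤ b := le_max_right _ _
        _ ≤ b * Real.exp b :=
          le_mul_of_one_le_right hb0 (Real.one_le_exp hb0)
      have hfa : (-1 : ℝ) * Real.exp (-1) ≤ cv := by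
        have heq : (-1 : ℝ) * Real.exp (-1) = (-1) / Real.exp 1 := by
          rw [Real.exp_neg]; ring
        rw [heq, hcv_def]
        have h1 : (0:ℝ) < g * η * P_s := mul_pos hgη hPs0
        gcongr
        linarith
      have hcont : ContinuousOn (fun w : ℝ => w * Real.exp w) (Set.Icc (-1) b) :=
        Continuous.continuousOn (by continuity)
      have hmem : cv ∈ Set.Icc ((fun w : ℝ => w * Real.exp w) (-1))
          ((fun w : ℝ => w * Real.exp w) b) := ⟨hfa, hfb⟩
      obtain ⟨w, hwmem, hweq⟩ :=
        intermediate_value_Icc (by linarith : (-1 : ℝ) ≤ b) hcont hmem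
      have hw1 : (-1 : ℝ) ≤ w := hwmem.1
      have hre := hcond w hw1 hweq
      refine ⟨w + 1, by linarith, ?_, ?_⟩
      · have h1 : a * (W / Real.log 2 * (w + 1)) ≤ a * (lam * L) :=
          mul_le_mul_of_nonneg_left hre (le_of_lt ha)
        have h2 : a * (W / Real.log 2 * (w + 1)) = w + 1 := by
          rw [ha_def]; field_simp
        linarith [h1, h2 ▸ h1]
      · -- c * φ(w+1) = P_s
        have hE : Real.exp (w + 1) = Real.exp w * Real.exp 1 := by
          rw [← Real.exp_add]
        have hweq' : w * Real.exp w = cv := hweq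
        have hcv : w * Real.exp w * Real.exp 1 = g * η * P_s - 1 := by
          rw [hweq', hcv_def]
          field_simp
        have : c * ((w + 1 - 1) * Real.exp (w + 1) + 1) = P_s := by
          rw [hE, hc_def]
          field_simp
          nlinarith [hcv]
        linarith [this.ge]
  -- the core ratio function
  set hf : ℝ → ℝ := fun r => (P_s + (Real.exp (a * r) - 1) * c) / r with hf_def
  have hmono : StrictMonoOn hf (Set.Ioi (lam * L)) := by
    apply strictMonoOn_of_deriv_pos (convex_Ioi _)
    · intro r hr
      have hr0 : r ≠ 0 := ne_of_gt (lt_trans hlamL hr)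
      have hnum : Continuous (fun r : ℝ => P_s + (Real.exp (a * r) - 1) * c) :=
        continuous_const.add
          (((Real.continuous_exp.comp (continuous_const.mul continuous_id)).sub
            continuous_const).mul continuous_const)
      exact (hnum.continuousAt.div continuousAt_id hr0).continuousWithinAt
    · intro r hr
      rw [interior_Ioi] at hr
      have hrR : lam * L < r := hr
      have hr0 : 0 < r := lt_trans hlamL hrR
      have hnum : HasDerivAt (fun r : ℝ => P_s + (Real.exp (a * r) - 1) * c)
          (a * Real.exp (a * r) * c) r := by
        have h1 : HasDerivAt (fun r : ℝ => a * r) a r := by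
          simpa using (hasDerivAt_id r).const_mul a
        have h2 : HasDerivAt (fun r : ℝ => Real.exp (a * r)) (Real.exp (a * r) * a) r :=
          (Real.hasDerivAt_exp (a * r)).comp r h1
        have := ((h2.sub_const 1).mul_const c).const_add P_s
        exact this.congr_deriv (by ring)
      have hd : HasDerivAt hf
          ((a * Real.exp (a * r) * c * r - (P_s + (Real.exp (a * r) - 1) * c) * 1) / r ^ 2)
          r := hnum.div (hasDerivAt_id r) (ne_of_gt hr0)
      rw [hd.deriv]
      apply div_pos _ (by positivity)
      -- numerator = c*φ(a r) - P_s > 0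
      have hlt : t₀ < a * r := lt_of_le_of_lt ht₀le (by
        exact mul_lt_mul_of_pos_left hrR ha)
      have hphi : (t₀ - 1) * Real.exp t₀ + 1 < (a * r - 1) * Real.exp (a * r) + 1 :=
        phi_strictMono (Set.mem_Ici.mpr ht₀0)
          (Set.mem_Ici.mpr (le_of_lt (lt_of_le_of_lt ht₀0 hlt))) hlt
      nlinarith [mul_lt_mul_of_pos_left hphi hc]
  -- transfer to EP
  have hrpow : ∀ r : ℝ, (2 : ℝ) ^ (r / W) = Real.exp (a * r) := by
    intro r
    rw [Real.rpow_def_of_pos (by norm_num : (0:ℝ) < 2)]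
    congr 1
    rw [ha_def]; ring
  intro x hx y hy hxy
  have hx' : lam * L < x := hx
  have hy' : lam * L < y := hy
  rw [hEP x hx', hEP y hy', hrpow x, hrpow y]
  have h1 : hf x < hf y := hmono hx hy hxy
  have ex : (lam * L / x) * (P_s + (Real.exp (a * x) - 1) / (g * η)) = lam * L * hf x := by
    rw [hf_def, hc_def]; ring
  have ey : (lam * L / y) * (P_s + (Real.exp (a * y) - 1) / (g * η)) = lam * L * hf y := by
    rw [hf_def, hc_def]; ring
  have : lam * L * hf x < lam * L * hf y := mul_lt_mul_of_pos_left h1 hlamL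
  linarith [ex, ey]
end

section
/- Assume P_s > 0 and λL < r_e, where r_e = (W/ln 2)(w + 1) with w the unique real ≥ −1 satisfying w·e^w = (g η P_s − 1)/e. Then for any rates λL < r₁ < r₂ ≤ r_e, both the average power and the average delay strictly decrease when moving from r₁ to r₂: E{P}(r₂) < E{P}(r₁) and E{n}(r₂) < E{n}(r₁). Hence for r < r_e one can reduce the average delay and save energy simultaneously. -/
/-- When `P_s > 0` and `λL < r_e`, for any rates `λL < r₁ < r₂ ≤ r_e`, both the
average power and the average delay strictly decrease when moving from `r₁` to `r₂`:
below `r_e` one can reduce delay and save energy simultaneously. -/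
theorem save_energy_and_delay_simultaneously
    (lam L W g η E_sw P_sleep κ₁ P_o P_s : ℝ)
    (hlam : 0 < lam) (hL : 0 < L) (hW : 0 < W) (hg : 0 < g) (hη : 0 < η)
    (hEsw : 0 ≤ E_sw) (hPsleep : 0 ≤ P_sleep) (hκ₁ : 0 ≤ κ₁)
    (hPs : P_s = P_o - P_sleep - 2 * lam * E_sw)
    (EP En : ℝ → ℝ)
    (hEP : ∀ r : ℝ, lam * L < r → EP r =
      κ₁ * lam * L + (lam * L / r) * (P_s + ((2 : ℝ) ^ (r / W) - 1) / (g * η))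
        + P_sleep + 2 * lam * E_sw)
    (hEn : ∀ r : ℝ, lam * L < r → En r = lam * L / (r - lam * L))
    (hPspos : 0 < P_s)
    (w : ℝ) (hw : -1 ≤ w)
    (hweq : w * Real.exp w = (g * η * P_s - 1) / Real.exp 1)
    (re : ℝ) (hre : re = W / Real.log 2 * (w + 1))
    (hLre : lam * L < re) :
    ∀ r₁ r₂ : ℝ, lam * L < r₁ → r₁ < r₂ → r₂ ≤ re →
      EP r₂ < EP r₁ ∧ En r₂ < En r₁ := by
  intro r₁ r₂ h1 h12 h2e
  have hLL : 0 < lam * L := mul_pos hlam hL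
  have hlog2 : 0 < Real.log 2 := Real.log_pos one_lt_two
  have hgη : 0 < g * η := mul_pos hg hη
  set a := Real.log 2 / W with ha
  have hapos : 0 < a := div_pos hlog2 hW
  set c := (g * η)⁻¹ with hc
  have hcpos : 0 < c := inv_pos.mpr hgη
  have hcgη : c * (g * η) = 1 := inv_mul_cancel₀ (ne_of_gt hgη)
  set F := fun r : ℝ => (P_s + (Real.exp (a * r) - 1) * c) / r with hFdef
  -- rewrite EP in terms of F
  have hEPF : ∀ r : ℝ, lam * L < r →
      EP r = κ₁ * lam * L + lam * L * F r + P_sleep + 2 * lam * E_sw := by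
    intro r hr
    rw [hEP r hr]
    have h2 : (2 : ℝ) ^ (r / W) = Real.exp (a * r) := by
      rw [Real.rpow_def_of_pos two_pos]
      congr 1
      field_simp [ha]
      rw [ha]
      field_simp
    rw [h2]
    simp only [hFdef]
    rw [div_eq_mul_inv (Real.exp (a * r) - 1) (g * η), ← hc]
    ring
  -- a * re = w + 1
  have hare : a * re = w + 1 := by
    rw [hre, ha]
    field_simp
  have hw1 : 0 ≤ w + 1 := by linarith
  -- φ strictly monotone on [0, ∞)
  have hφmono : StrictMonoOn (fun x : ℝ => (x - 1) * Real.exp x) (Set.Ici 0) := by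
    apply strictMonoOn_of_deriv_pos (convex_Ici 0) (by fun_prop)
    intro x hx
    rw [interior_Ici] at hx
    have hd : HasDerivAt (fun x : ℝ => (x - 1) * Real.exp x) (x * Real.exp x) x := by
      have := ((hasDerivAt_id x).sub_const 1).mul (Real.hasDerivAt_exp x)
      exact this.congr_deriv (by simp only [id_eq]; ring)
    rw [hd.deriv]
    exact mul_pos hx (Real.exp_pos x)
  -- value of φ at w + 1
  have hφw : (w + 1 - 1) * Real.exp (w + 1) = g * η * P_s - 1 := by
    have he : Real.exp 1 ≠ 0 := ne_of_gt (Real.exp_pos 1)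
    rw [Real.exp_add]
    have : w * Real.exp w = (g * η * P_s - 1) / Real.exp 1 := hweq
    field_simp at this ⊢
    nlinarith [this]
  -- derivative of F
  have hderiv : ∀ r : ℝ, r ≠ 0 → HasDerivAt F
      ((a * Real.exp (a * r) * c * r - (P_s + (Real.exp (a * r) - 1) * c)) / r ^ 2) r := by
    intro r hr0
    have h1' : HasDerivAt (fun r : ℝ => a * r) a r := by
      simpa using (hasDerivAt_id r).const_mul a
    have h2' : HasDerivAt (fun r : ℝ => Real.exp (a * r)) (Real.exp (a * r) * a) r :=
      (Real.hasDerivAt_exp (a * r)).comp r h1'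
    have hN : HasDerivAt (fun r : ℝ => P_s + (Real.exp (a * r) - 1) * c)
        (a * Real.exp (a * r) * c) r := by
      have := ((h2'.sub_const 1).mul_const c).const_add P_s
      exact this.congr_deriv (by ring)
    have := hN.div (hasDerivAt_id r) hr0
    exact this.congr_deriv (by simp)
  -- F is strictly antitone on [lam*L, re]
  have hanti : StrictAntiOn F (Set.Icc (lam * L) re) := by
    apply strictAntiOn_of_deriv_neg (convex_Icc _ _)
    · apply ContinuousOn.div (by fun_prop) continuousOn_id
      intro x hx
      exact ne_of_gt (lt_of_lt_of_le hLL hx.1)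
    · intro x hx
      rw [interior_Icc] at hx
      have hx0 : 0 < x := lt_trans hLL hx.1
      rw [(hderiv x (ne_of_gt hx0)).deriv]
      apply div_neg_of_neg_of_pos _ (by positivity)
      have hax : 0 < a * x := mul_pos hapos hx0
      have haxlt : a * x < w + 1 := by
        rw [← hare]
        exact mul_lt_mul_of_pos_left hx.2 hapos
      have hφlt : (a * x - 1) * Real.exp (a * x) < g * η * P_s - 1 := by
        rw [← hφw]
        exact hφmono (le_of_lt hax) hw1 haxlt
      nlinarith [mul_lt_mul_of_pos_left hφlt hcpos, Real.exp_pos (a * x)]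
  -- conclude
  have hr2L : lam * L < r₂ := lt_trans h1 h12
  have hm1 : r₁ ∈ Set.Icc (lam * L) re := ⟨le_of_lt h1, le_trans (le_of_lt h12) h2e⟩
  have hm2 : r₂ ∈ Set.Icc (lam * L) re := ⟨le_of_lt hr2L, h2e⟩
  have hF12 : F r₂ < F r₁ := hanti hm1 hm2 h12
  constructor
  · rw [hEPF r₁ h1, hEPF r₂ hr2L]
    have := mul_lt_mul_of_pos_left hF12 hLL
    linarith
  · rw [hEn r₁ h1, hEn r₂ hr2L]
    apply div_lt_div_of_pos_left hLL (by linarith) (by linarith)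
end

section
/- The unique solution r* ∈ (λL, ∞) of the stationarity equation (r ln 2 / W − 1)·exp(r ln 2 / W − 1) = (α g η (r/(r − λL))² + g η P_s − 1)/e is strictly increasing in P_s: if P_s' > P_s and r*, r*' are the corresponding unique solutions, then r*' > r*. In particular, since P_s is strictly increasing in the number of CPU cores N_c (through P_o = N_c·P_Bm + c with P_Bm > 0), increasing the number of CPU cores strictly increases the optimal rate. -/
/-- `x * exp x` is monotone on `[-1, ∞)`. -/
lemma monotoneOn_mul_exp : MonotoneOn (fun x : ℝ => x * Real.exp x) (Set.Ici (-1)) := by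
  apply monotoneOn_of_deriv_nonneg (convex_Ici _)
  · exact ((continuous_id.mul Real.continuous_exp)).continuousOn
  · intro x _
    exact ((differentiable_id.mul Real.differentiable_exp) x).differentiableWithinAt
  · intro x hx
    rw [interior_Ici] at hx
    have hd : HasDerivAt (fun x : ℝ => x * Real.exp x) (1 * Real.exp x + x * Real.exp x) x :=
      (hasDerivAt_id x).mul (Real.hasDerivAt_exp x)
    rw [hd.deriv]
    nlinarith [Real.exp_pos x, (Set.mem_Ioi.mp hx).le]

/-- The unique solution `r*` of the stationarity equation is strictly increasing in
`P_s`: larger `P_s` (e.g. from more CPU cores) gives a strictly larger optimal rate. -/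
theorem optimal_rate_strictMono_in_Ps
    (lam L W g η α : ℝ)
    (hlam : 0 < lam) (hL : 0 < L) (hW : 0 < W) (hg : 0 < g) (hη : 0 < η)
    (hα : 0 < α)
    (P_s P_s' : ℝ) (hPs : P_s < P_s')
    (rstar rstar' : ℝ)
    (hr : lam * L < rstar) (hr' : lam * L < rstar')
    (heq : (rstar * Real.log 2 / W - 1) * Real.exp (rstar * Real.log 2 / W - 1) =
      (α * g * η * (rstar / (rstar - lam * L)) ^ 2 + g * η * P_s - 1) / Real.exp 1)
    (heq' : (rstar' * Real.log 2 / W - 1) * Real.exp (rstar' * Real.log 2 / W - 1) =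
      (α * g * η * (rstar' / (rstar' - lam * L)) ^ 2 + g * η * P_s' - 1) / Real.exp 1) :
    rstar < rstar' := by
  by_contra hcon
  push_neg at hcon
  have hc : 0 < lam * L := mul_pos hlam hL
  have hrpos : 0 < rstar := hc.trans hr
  have hr'pos : 0 < rstar' := hc.trans hr'
  have hln2 : 0 < Real.log 2 := Real.log_pos (by norm_num)
  -- the two arguments of x * exp x lie in [-1, ∞)
  have hx' : (-1 : ℝ) ≤ rstar' * Real.log 2 / W - 1 := by
    have : 0 < rstar' * Real.log 2 / W := div_pos (mul_pos hr'pos hln2) hW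
    linarith
  have hle : rstar' * Real.log 2 / W - 1 ≤ rstar * Real.log 2 / W - 1 := by
    have : rstar' * Real.log 2 / W ≤ rstar * Real.log 2 / W := by
      gcongr
    linarith
  have hf : (rstar' * Real.log 2 / W - 1) * Real.exp (rstar' * Real.log 2 / W - 1) ≤
      (rstar * Real.log 2 / W - 1) * Real.exp (rstar * Real.log 2 / W - 1) :=
    monotoneOn_mul_exp hx' (hx'.trans hle) hle
  -- the ratio term is antitone
  have hd : 0 < rstar - lam * L := by linarith
  have hd' : 0 < rstar' - lam * L := by linarith
  have hratio : rstar / (rstar - lam * L) ≤ rstar' / (rstar' - lam * L) := by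
    rw [div_le_div_iff₀ hd hd']
    nlinarith
  have hratio_pos : 0 < rstar / (rstar - lam * L) := div_pos hrpos hd
  have hA : (rstar / (rstar - lam * L)) ^ 2 ≤ (rstar' / (rstar' - lam * L)) ^ 2 := by
    have := hratio_pos.le
    nlinarith
  -- combine
  have he : 0 < Real.exp 1 := Real.exp_pos 1
  rw [heq, heq'] at hf
  rw [div_le_div_iff₀ he he] at hf
  nlinarith [mul_pos (mul_pos hα hg) hη, mul_pos hg hη,
    mul_lt_mul_of_pos_left hPs (mul_pos hg hη),
    mul_le_mul_of_nonneg_left hA (mul_pos (mul_pos hα hg) hη).le]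
end

section
/- (Correctness of the break condition in the joint optimization algorithm) Let P_o(N) = N·P_Bm + c with P_Bm > 0, let z(r, N) denote the system cost with P_o = P_o(N), and suppose for some N the global minimizer r̂ of z(·, N) over (λL, ∞) exists. Then for every N' > N and every r ∈ (λL, ∞), z(r, N') > z(r̂, N). Consequently, once the locally optimal rate is feasible for the current number of CPU cores, no configuration with more CPU cores can achieve a strictly smaller cost, so the algorithm may terminate its search. -/
/-- Correctness of the break condition in the joint optimization algorithm: if `r̂` is
a global minimizer of `z(·, N)` over `(λL, ∞)`, then every configuration with more CPU
cores `N' > N` has strictly larger cost at every feasible rate. -/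
theorem break_condition_correct
    (lam L W g η α E_sw P_sleep κ₁ P_Bm c : ℝ)
    (hlam : 0 < lam) (hL : 0 < L) (hW : 0 < W) (hg : 0 < g) (hη : 0 < η)
    (hα : 0 < α) (hEsw : 0 ≤ E_sw) (hPsleep : 0 ≤ P_sleep) (hκ₁ : 0 ≤ κ₁)
    (hPBm : 0 < P_Bm)
    (z : ℝ → ℕ → ℝ)
    (hz : ∀ (r : ℝ) (N : ℕ), z r N =
      κ₁ * lam * L
        + (lam * L / r) * (((N : ℝ) * P_Bm + c - P_sleep - 2 * lam * E_sw)
            + ((2 : ℝ) ^ (r / W) - 1) / (g * η))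
        + P_sleep + 2 * lam * E_sw + α * (lam * L / (r - lam * L)))
    (N : ℕ) (rhat : ℝ) (hrhat : lam * L < rhat)
    (hmin : ∀ r : ℝ, lam * L < r → z rhat N ≤ z r N) :
    ∀ N' : ℕ, N < N' → ∀ r : ℝ, lam * L < r → z rhat N < z r N' := by
  intro N' hN' r hr
  have hr0 : 0 < r := lt_trans (by positivity) hr
  have hNN : (N : ℝ) < (N' : ℝ) := by exact_mod_cast hN'
  have key : z r N < z r N' := by
    rw [hz r N, hz r N']
    have hpos : 0 < lam * L / r := by positivity
    nlinarith [mul_pos hpos (mul_pos (sub_pos.mpr hNN) hPBm)]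
  exact lt_of_le_of_lt (hmin r hr) key
end
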